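/- arXiv:1208.3538 — 2 statements merged into one kernel-verified Lean document; each statement's English description precedes it below -/
import Mathlib

section
/- Let A be an n×n column stochastic matrix and M = A - I. Define the vector v by v_k = det(M_{k,k}), where M_{k,k} is the (n-1)×(n-1) matrix obtained from M by deleting its k-th row and k-th column. Then A v = v, i.e., M v = 0. -/
/-!
Since the columns of a column stochastic matrix `A` sum to one, the columns of `M = A - 1` sum to
zero. For such an `M`, each row of the adjugate is constant: replacing column `k` of `M` by
`eᵢ - eₖ` leaves all column sums zero, hence gives determinant zero, so by linearity
`adj M k i = adj M k k`. The vector `v` is the diagonal of `adj M`, so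
`(M v)ᵢ = ∑ₖ M i k * adj M k i = det M = 0`.
-/

namespace Matrix

variable {ι R : Type*} [Fintype ι] [DecidableEq ι] [CommRing R]

theorem det_eq_zero_of_sum_col_eq_zero [Nonempty ι] {M : Matrix ι ι R}
    (hM : ∀ j, ∑ i, M i j = 0) : M.det = 0 := by
  have hvec : (fun _ => 1 : ι → R) ᵥ* M = 0 := funext fun j => by simp [vecMul, dotProduct, hM]
  have hsmul : M.det • (fun _ => 1 : ι → R) = 0 := by
    rw [← vecMul_one (fun _ => 1), ← vecMul_smul, ← mul_adjugate, ← vecMul_vecMul, hvec,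
      zero_vecMul]
  simpa using congrFun hsmul (Classical.arbitrary ι)

theorem adjugate_apply_eq_det_updateCol (M : Matrix ι ι R) (k j : ι) :
    adjugate M k j = (M.updateCol k (Pi.single j 1)).det := by
  rw [← transpose_apply (adjugate M), adjugate_transpose, adjugate_apply, ← det_transpose,
    updateRow_transpose, transpose_transpose]

theorem adjugate_apply_eq_adjugate_apply_self_of_sum_col_eq_zero {M : Matrix ι ι R}
    (hM : ∀ j, ∑ i, M i j = 0) (k j : ι) : adjugate M k j = adjugate M k k := by
  have : Nonempty ι := ⟨k⟩
  have hzero : (M.updateCol k (Pi.single j 1 - Pi.single k 1)).det = 0 := by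
    refine det_eq_zero_of_sum_col_eq_zero fun l => ?_
    rcases eq_or_ne l k with rfl | hl
    · simp [Finset.sum_sub_distrib]
    · simpa [updateCol_ne hl] using hM l
  rw [adjugate_apply_eq_det_updateCol, adjugate_apply_eq_det_updateCol,
    ← sub_add_cancel (Pi.single j 1 : ι → R) (Pi.single k 1), det_updateCol_add, hzero, zero_add]

theorem mulVec_diag_adjugate_eq_zero_of_sum_col_eq_zero {M : Matrix ι ι R}
    (hM : ∀ j, ∑ i, M i j = 0) : M *ᵥ (adjugate M).diag = 0 := by
  funext i
  have : Nonempty ι := ⟨i⟩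
  calc (M *ᵥ (adjugate M).diag) i = ∑ k, M i k * adjugate M k i := by
        simp only [mulVec, dotProduct, diag,
          adjugate_apply_eq_adjugate_apply_self_of_sum_col_eq_zero hM _ i]
    _ = M.det := (det_eq_sum_mul_adjugate_row M i).symm
    _ = 0 := det_eq_zero_of_sum_col_eq_zero hM

end Matrix

open Matrix in
theorem stmt_2_general (n : ℕ) (A : Matrix (Fin (n + 1)) (Fin (n + 1)) ℝ)
    (hcol : ∀ j, ∑ i, A i j = 1) :
    let M : Matrix (Fin (n + 1)) (Fin (n + 1)) ℝ := A - 1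
    let v : Fin (n + 1) → ℝ := fun k => (M.submatrix k.succAbove k.succAbove).det
    A.mulVec v = v ∧ M.mulVec v = 0 := by
  intro M v
  have hM : ∀ j, ∑ i, M i j = 0 := fun j => by
    simp [M, Matrix.sub_apply, Finset.sum_sub_distrib, hcol j, one_apply]
  have hv : v = (adjugate M).diag := funext fun k => by
    simp [v, adjugate_fin_succ_eq_det_submatrix, ← two_mul, pow_mul]
  have hMv : M *ᵥ v = 0 := hv ▸ mulVec_diag_adjugate_eq_zero_of_sum_col_eq_zero hM
  have hA : A = M + 1 := (sub_add_cancel A 1).symm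
  exact ⟨by rw [hA, add_mulVec, hMv, one_mulVec, zero_add], hMv⟩

theorem stmt_2 (n : ℕ) (A : Matrix (Fin (n + 1)) (Fin (n + 1)) ℝ)
    (hnonneg : ∀ i j, 0 ≤ A i j) (hcol : ∀ j, ∑ i, A i j = 1) :
    let M : Matrix (Fin (n + 1)) (Fin (n + 1)) ℝ := A - 1
    let v : Fin (n + 1) → ℝ := fun k => (M.submatrix k.succAbove k.succAbove).det
    A.mulVec v = v ∧ M.mulVec v = 0 :=
  stmt_2_general n A hcol
end

section
/- For n = 2, 3, 4, the number of monomials (counted with multiplicity after cancellation, each having coefficient ±1) in each coordinate of the cofactor eigenvector v_k = det(M_{k,k}) of the n-state Markov matrix, viewed as a polynomial in the variables τ_{ij}, equals n^{n−2}. In particular, for n = 3 each coordinate is a sum of exactly 3 monomials in the six variables τ_{ij}. -/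
open MvPolynomial

/-- The `n × n` Markov transition matrix with symbolic entries: the off-diagonal
`(r, c)` entry (row `r`, column `c`) is the variable `τ_{c r}` (probability of switching
from state `c` to state `r`), and the `c`-th diagonal entry is `1 - ∑_{l ≠ c} τ_{c l}`. -/
noncomputable def markovA (n : ℕ) :
    Matrix (Fin n) (Fin n) (MvPolynomial (Fin n × Fin n) ℚ) := fun r c =>
  if r = c then 1 - ∑ l ∈ Finset.univ.erase c, X (c, l) else X (c, r)

/-- The `k`-th coordinate of the cofactor eigenvector: the determinant of `M = A - I`
with its `k`-th row and `k`-th column deleted. -/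
noncomputable def cofVec (m : ℕ) (k : Fin (m + 1)) :
    MvPolynomial (Fin (m + 1) × Fin (m + 1)) ℚ :=
  ((markovA (m + 1) - 1).submatrix k.succAbove k.succAbove).det

/-!
Write `M = A - I` as the generator of a chain with rates `τ_{c l}`: column `c` of `M` is
`∑_{l ≠ c} τ_{c l} (e_l - e_c)`. Deleting row and column `k` and expanding the determinant
multilinearly in the columns gives a sum over all pointer maps `g` (each state `c ≠ k` picks a
target `g c`) of `∏ τ_{c, g c}` times the determinant of `P_g - I`, where `P_g` is the 0/1 matrix of
`g` with the root `k` deleted. That determinant is `(-1)^(n-1)` when following pointers always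
leads to `k` (a spanning tree rooted at `k`) and `0` otherwise, so `det M_{k,k}` is `±` the sum of
the tree monomials, which are pairwise distinct. Counting rooted spanning trees for `n ≤ 4` gives
`n^(n-2)`.
-/

open Finset Matrix

theorem Matrix.det_eq_zero_of_vecMul_eq_zero {n R : Type*} [Fintype n] [DecidableEq n]
    [CommRing R] {M : Matrix n n R} {y : n → R} {i : n} (hi : y i = 1) (h : y ᵥ* M = 0) :
    M.det = 0 := by
  rw [← det_transpose]
  exact det_eq_zero_of_mulVec_eq_zero_of_mem_nonZeroDivisors (by rwa [mulVec_transpose])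
    (hi ▸ one_mem _)

section RootedForest

variable {κ ι : Type*} [DecidableEq ι]

/- Node `c : κ` sits at `e c` and points to `g c`; the points of `ι` outside the range of `e` are
the roots. A trap is a set of nodes that the pointers never leave. -/
def IsTrap (e g : κ → ι) (S : Finset κ) : Prop :=
  ∀ c ∈ S, g c ∈ S.image e

def IsRootedForest (e g : κ → ι) : Prop :=
  ∀ S, IsTrap e g S → S = ∅

instance [Fintype κ] [DecidableEq κ] (e g : κ → ι) : Decidable (IsRootedForest e g) := by
  unfold IsRootedForest IsTrap; infer_instance

/- Take the union of all traps: it is the largest trap. -/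
theorem exists_trap_of_not_isRootedForest [Fintype κ] {e g : κ → ι}
    (hg : ¬IsRootedForest e g) : ∃ T : Finset κ, T.Nonempty ∧ ∀ c, c ∈ T ↔ g c ∈ T.image e := by
  classical
  obtain ⟨S, hS, hSne⟩ : ∃ S, IsTrap e g S ∧ S ≠ ∅ := by simpa [IsRootedForest] using hg
  let T := univ.filter fun c => ∃ S, IsTrap e g S ∧ c ∈ S
  have hST : S ⊆ T := fun c hc => mem_filter.mpr ⟨mem_univ c, S, hS, hc⟩
  refine ⟨T, (nonempty_iff_ne_empty.mpr hSne).mono hST, fun c => ⟨fun hc => ?_, fun hc => ?_⟩⟩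
  · obtain ⟨S, hS, hcS⟩ := (mem_filter.mp hc).2
    obtain ⟨d, hdS, hd⟩ := mem_image.mp (hS c hcS)
    exact mem_image.mpr ⟨d, mem_filter.mpr ⟨mem_univ d, S, hS, hdS⟩, hd⟩
  · obtain ⟨d, hdT, hd⟩ := mem_image.mp hc
    obtain ⟨S, hS, hdS⟩ := (mem_filter.mp hdT).2
    refine mem_filter.mpr ⟨mem_univ c, insert c S, fun x hx => ?_, mem_insert_self c S⟩
    rcases mem_insert.mp hx with rfl | hx
    · exact mem_image.mpr ⟨d, mem_insert_of_mem hdS, hd⟩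
    · exact image_subset_image (subset_insert c S) (hS x hx)

variable {R : Type*} [CommRing R] [DecidableEq κ]

def funLaplacian (e g : κ → ι) : Matrix κ κ R :=
  of (fun r c => if e r = g c then 1 else 0) - 1

variable {e g : κ → ι}

theorem funLaplacian_apply (r c : κ) :
    (funLaplacian e g : Matrix κ κ R) r c = (if e r = g c then 1 else 0) - if r = c then 1 else 0 :=
  by simp [funLaplacian, one_apply]

section

variable [Fintype κ]

/- For `σ ≠ 1` the points moved by `σ` would form a trap, so only `σ = 1` survives in the
Leibniz expansion; it contributes `∏ c, (0 - 1)` since a forest has no loop `g c = e c`. -/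
theorem det_funLaplacian_of_isRootedForest (hg : IsRootedForest e g) :
    (funLaplacian e g : Matrix κ κ R).det = (-1) ^ Fintype.card κ := by
  have hσ : ∀ σ : Equiv.Perm κ, σ ≠ 1 → ∏ c, (funLaplacian e g : Matrix κ κ R) (σ c) c = 0 := by
    intro σ hσ
    obtain ⟨c, hc, hgc⟩ : ∃ c ∈ σ.support, g c ≠ e (σ c) := by
      by_contra! h
      refine Equiv.Perm.support_eq_empty_iff.not.mpr hσ (hg _ fun c hc => ?_)
      exact h c hc ▸ mem_image_of_mem e (Equiv.Perm.apply_mem_support.mpr hc)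
    refine prod_eq_zero (mem_univ c) ?_
    simp [funLaplacian, Ne.symm hgc, Equiv.Perm.mem_support.mp hc]
  have hloop : ∀ c, g c ≠ e c := fun c h =>
    singleton_ne_empty c (hg {c} (by simp [IsTrap, h]))
  rw [det_apply, sum_eq_single 1 (fun σ _ h => by rw [hσ σ h, smul_zero]) (by simp)]
  simp [funLaplacian, Ne.symm (hloop _)]

/- The indicator of the largest trap is a left null vector. -/
theorem det_funLaplacian_of_not_isRootedForest (he : Function.Injective e)
    (hg : ¬IsRootedForest e g) : (funLaplacian e g : Matrix κ κ R).det = 0 := by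
  obtain ⟨T, ⟨i, hi⟩, hT⟩ := exists_trap_of_not_isRootedForest hg
  refine det_eq_zero_of_vecMul_eq_zero (y := fun r => if r ∈ T then 1 else 0) (if_pos hi)
    (funext fun c => ?_)
  by_cases hc : c ∈ T
  · obtain ⟨d, hdT, hd⟩ := mem_image.mp ((hT c).mp hc)
    simp [vecMul, dotProduct, funLaplacian, one_apply, ← hd, he.eq_iff, hdT, hc]
  · have : ∀ d ∈ T, e d ≠ g c := fun d hd h => hc ((hT c).mpr (mem_image.mpr ⟨d, hd, h⟩))
    simp [vecMul, dotProduct, funLaplacian, one_apply, hc, filter_false_of_mem this]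

end

variable [Fintype ι]

/- Column `c` holds the rates `w c l` out of state `c`, so that every column sums to zero. -/
def markovGenerator (w : ι → ι → R) : Matrix ι ι R :=
  of fun r c => if r = c then -∑ l ∈ univ.erase c, w c l else w c r

theorem markovGenerator_submatrix_apply (w : ι → ι → R) (he : Function.Injective e) (r c : κ) :
    (markovGenerator w).submatrix e e r c =
      ∑ l, w (e c) l * ((if e r = l then 1 else 0) - if r = c then 1 else 0) := by
  by_cases hrc : r = c
  · subst hrc
    rw [← add_sum_erase _ _ (mem_univ (e r))]
    simp [markovGenerator, mul_sub, sum_sub_distrib]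
  · simp [markovGenerator, he.ne hrc, hrc]

variable [Fintype κ]

theorem det_markovGenerator_submatrix (w : ι → ι → R) (he : Function.Injective e) :
    ((markovGenerator w).submatrix e e).det =
      ∑ g : κ → ι, (∏ c, w (e c) (g c)) * (funLaplacian e g : Matrix κ κ R).det := by
  simp_rw [det_apply, markovGenerator_submatrix_apply w he, Fintype.prod_sum, smul_sum, mul_sum]
  rw [sum_comm]
  refine sum_congr rfl fun g _ => sum_congr rfl fun σ _ => ?_
  simp_rw [funLaplacian_apply, prod_mul_distrib, mul_smul_comm]

theorem det_markovGenerator_submatrix_eq_sum_isRootedForest (w : ι → ι → R)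
    (he : Function.Injective e) :
    ((markovGenerator w).submatrix e e).det =
      (-1) ^ Fintype.card κ * ∑ g with IsRootedForest e g, ∏ c, w (e c) (g c) := by
  rw [det_markovGenerator_submatrix w he, sum_filter, mul_sum]
  refine sum_congr rfl fun g _ => ?_
  split_ifs with hg
  · rw [det_funLaplacian_of_isRootedForest hg, mul_comm]
  · simp only [det_funLaplacian_of_not_isRootedForest he hg, mul_zero]

end RootedForest

section Monomials

variable {α σ R : Type*} [DecidableEq σ] [CommSemiring R] {s : Finset α} {d : α → σ →₀ ℕ}

theorem coeff_sum_monomial_of_injOn (hd : Set.InjOn d s) (a : R) (x : σ →₀ ℕ) :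
    coeff x (∑ i ∈ s, monomial (d i) a) = if x ∈ s.image d then a else 0 := by
  simp only [coeff_sum, coeff_monomial]
  split_ifs with hx
  · obtain ⟨j, hj, rfl⟩ := mem_image.mp hx
    rw [sum_eq_single j (fun i hi hij => if_neg fun h => hij (hd hi hj h)) (absurd hj), if_pos rfl]
  · exact sum_eq_zero fun i hi => if_neg fun h => hx (mem_image.mpr ⟨i, hi, h⟩)

theorem support_sum_monomial_of_injOn (hd : Set.InjOn d s) {a : R} (ha : a ≠ 0) :
    (∑ i ∈ s, monomial (d i) a).support = s.image d := by
  ext x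
  rw [mem_support_iff, coeff_sum_monomial_of_injOn hd]
  split_ifs with hx <;> simp [hx, ha]

end Monomials

section GraphExponent

variable {κ ι : Type*} [Fintype κ] [DecidableEq ι] {e : κ → ι}

noncomputable def graphExponent (e g : κ → ι) : ι × ι →₀ ℕ :=
  ∑ c, Finsupp.single (e c, g c) 1

theorem graphExponent_apply (he : Function.Injective e) (g : κ → ι) (c : κ) (l : ι) :
    graphExponent e g (e c, l) = if g c = l then 1 else 0 := by
  rw [graphExponent, Finsupp.finsetSum_apply,
    sum_eq_single c (fun b _ hb => Finsupp.single_eq_of_ne (by simp [he.eq_iff, hb.symm]))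
      (by simp)]
  simp [Finsupp.single_apply]

theorem graphExponent_injective (he : Function.Injective e) :
    Function.Injective (graphExponent e) := by
  intro g g' h
  funext c
  simpa [graphExponent_apply he, eq_comm] using congr($h (e c, g c))

end GraphExponent

theorem markovA_sub_one (n : ℕ) :
    markovA n - 1 = markovGenerator fun c l => X (c, l) := by
  ext r c
  by_cases h : r = c <;> simp [markovA, markovGenerator, h]

theorem cofVec_eq_sum_monomial (m : ℕ) (k : Fin (m + 1)) :
    cofVec m k = ∑ g with IsRootedForest k.succAbove g,
      monomial (graphExponent k.succAbove g) ((-1) ^ m) := by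
  rw [cofVec, markovA_sub_one,
    det_markovGenerator_submatrix_eq_sum_isRootedForest _ Fin.succAbove_right_injective,
    Fintype.card_fin, mul_sum]
  refine sum_congr rfl fun g _ => ?_
  rw [graphExponent, monomial_sum_index]
  simp [X]

theorem card_support_cofVec (m : ℕ) (k : Fin (m + 1)) :
    (cofVec m k).support.card = #{g | IsRootedForest k.succAbove g} := by
  rw [cofVec_eq_sum_monomial, support_sum_monomial_of_injOn
    (graphExponent_injective Fin.succAbove_right_injective).injOn (by simp),
    card_image_of_injective _ (graphExponent_injective Fin.succAbove_right_injective)]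

theorem coeff_cofVec_of_mem_support (m : ℕ) (k : Fin (m + 1)) :
    ∀ d ∈ (cofVec m k).support, (cofVec m k).coeff d = 1 ∨ (cofVec m k).coeff d = -1 := by
  intro d hd
  rw [mem_support_iff, cofVec_eq_sum_monomial, coeff_sum_monomial_of_injOn
    (graphExponent_injective Fin.succAbove_right_injective).injOn] at *
  split_ifs at hd ⊢
  · exact neg_one_pow_eq_or ℚ m
  · exact absurd rfl hd

/- Cayley's formula for rooted spanning trees on at most four vertices. -/
theorem card_isRootedForest_succAbove {m : ℕ} (hm : m ∈ ({1, 2, 3} : Set ℕ)) (k : Fin (m + 1)) :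
    #{g : Fin m → Fin (m + 1) | IsRootedForest k.succAbove g} = (m + 1) ^ (m - 1) := by
  revert k
  obtain rfl | rfl | rfl := hm <;> decide

theorem stmt_18 : ∀ m ∈ ({1, 2, 3} : Set ℕ), ∀ k : Fin (m + 1),
    (cofVec m k).support.card = (m + 1) ^ (m - 1) ∧
    ∀ d ∈ (cofVec m k).support, (cofVec m k).coeff d = 1 ∨ (cofVec m k).coeff d = -1 :=
  fun m hm k =>
    ⟨(card_support_cofVec m k).trans (card_isRootedForest_succAbove hm k),
      coeff_cofVec_of_mem_support m k⟩
end
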